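/- arXiv:1506.07346 — 2 statements merged into one kernel-verified Lean document; each statement's English description precedes it below -/
import Mathlib

section
/- Let Y be a rich solid QBF-space on X, assume the frame F has property F(ν,Y), let U = {U_i}_{i∈I} be an admissible covering of X and (ψ_z)_{z∈X} a family in H. Assume the kernel K(x,y) := sup_{z∈Q_y} |⟨φ_x, ψ_z⟩| acts boundedly on Y with operator quasi-norm |||K|||. Then for every sequence (λ_i)_{i∈I} ∈ Y♮(U) and every choice of points x_i ∈ U_i, the series Σ_{i∈I} λ_i ⟨ψ_{x_i}, φ_x⟩ converges absolutely for μ-a.e. x ∈ X, and the resulting function x ↦ Σ_{i∈I} λ_i ⟨ψ_{x_i}, φ_x⟩ belongs to Y with quasi-norm at most |||K||| · ‖(λ_i)|Y♮‖. -/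
/-!
For `y ∈ U i` we have `xi i ∈ Q_y`, so `|⟨φ_x, ψ_{xi i}⟩| ≤ K(x,y)`. Averaging this over `U i`
bounds `Σᵢ |λᵢ| |⟨φ_x, ψ_{xi i}⟩|` pointwise by `∫ K(x,y) G(y) dμ(y)`, where
`G = Σᵢ |λᵢ| μ(Uᵢ)⁻¹ χ_{Uᵢ}` is the function whose quasi-norm is `‖λ | Y♮‖`. Solidity and the
boundedness of `K` then give the estimate, and a function of finite quasi-norm is finite a.e.,
which is the absolute convergence. Separability of `H` makes the kernel `K` measurable.
-/

open MeasureTheory Filter Topology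
open scoped ENNReal NNReal

noncomputable section

/-- Model of a rich solid quasi-Banach function space `Y` on `(X, μ)`: `Y` is described by a
solid quasi-norm functional `N` on nonnegative extended-real valued functions (a measurable
`F : X → ℂ` belongs to `Y` iff `N (fun x => ‖F x‖₊) ≠ ∞`). -/
structure QBF (X : Type*) [MeasurableSpace X] (μ : MeasureTheory.Measure X) where
  /-- the quasi-norm functional -/
  N : (X → ℝ≥0∞) → ℝ≥0∞
  /-- the quasi-norm constant `C_Y` -/
  C : ℝ≥0∞
  one_le_C : 1 ≤ C
  C_ne_top : C ≠ ⊤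
  /-- solidity -/
  mono : ∀ f g : X → ℝ≥0∞, Measurable f → Measurable g →
    (∀ᵐ x ∂μ, f x ≤ g x) → N f ≤ N g
  /-- quasi-triangle inequality with constant `C_Y` -/
  add_le : ∀ f g : X → ℝ≥0∞, Measurable f → Measurable g →
    N (fun x => f x + g x) ≤ C * (N f + N g)
  /-- homogeneity -/
  smul_eq : ∀ (c : ℝ≥0∞) (f : X → ℝ≥0∞), Measurable f → N (fun x => c * f x) = c * N f
  /-- definiteness (up to a.e. equality) -/
  eq_zero : ∀ f : X → ℝ≥0∞, Measurable f → N f = 0 → f =ᵐ[μ] 0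
  /-- completeness of `Y` -/
  complete : ∀ F : ℕ → X → ℂ, (∀ n, Measurable (F n)) →
    (∀ n, N (fun x => (‖F n x‖₊ : ℝ≥0∞)) ≠ ⊤) →
    Filter.Tendsto (fun q : ℕ × ℕ => N (fun x => (‖F q.1 x - F q.2 x‖₊ : ℝ≥0∞)))
      Filter.atTop (nhds 0) →
    ∃ G : X → ℂ, Measurable G ∧ N (fun x => (‖G x‖₊ : ℝ≥0∞)) ≠ ⊤ ∧
      Filter.Tendsto (fun n => N (fun x => (‖F n x - G x‖₊ : ℝ≥0∞)))
        Filter.atTop (nhds 0)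

/-- An admissible covering of `X`: a locally finite covering by measurable, relatively
compact sets with nonempty interior and finite intersection number `σ`. -/
structure AdmissibleCovering {X : Type*} [TopologicalSpace X] [MeasurableSpace X]
    {I : Type*} (U : I → Set X) (σ : ℕ) : Prop where
  meas : ∀ i, MeasurableSet (U i)
  rel_compact : ∀ i, IsCompact (closure (U i))
  interior_nonempty : ∀ i, (interior (U i)).Nonempty
  covers : (⋃ i, U i) = Set.univ
  locFin : LocallyFinite U
  inter_finite : ∀ i, {j | (U i ∩ U j).Nonempty}.Finite
  inter_card_le : ∀ i, {j | (U i ∩ U j).Nonempty}.ncard ≤ σ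

variable {X : Type*} [TopologicalSpace X] [MeasurableSpace X] {μ : MeasureTheory.Measure X}

/-- The `Y♭(U)` quasi-norm of a sequence `λ`: `‖Σᵢ |λᵢ| χ_{Uᵢ} | Y‖`. -/
def flatN (Q : QBF X μ) {I : Type*} (U : I → Set X) (lam : I → ℂ) : ℝ≥0∞ :=
  Q.N (fun x => ∑' i, (U i).indicator (fun _ => (‖lam i‖₊ : ℝ≥0∞)) x)

/-- The `Y♮(U)` quasi-norm of a sequence `λ`: `‖Σᵢ |λᵢ| μ(Uᵢ)⁻¹ χ_{Uᵢ} | Y‖`. -/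
def natN (Q : QBF X μ) {I : Type*} (U : I → Set X) (lam : I → ℂ) : ℝ≥0∞ :=
  Q.N (fun x => ∑' i, (U i).indicator (fun _ => (‖lam i‖₊ : ℝ≥0∞) / μ (U i)) x)

variable {H : Type*} [NormedAddCommGroup H] [InnerProductSpace ℂ H]

/-- The `H¹_ν` norm of `f ∈ H`: `∫ |⟨f, φ_x⟩| ν(x) dμ(x)` (paper's `⟨f, φ_x⟩`, linear in the
first slot, is Mathlib's `⟪φ x, f⟫_ℂ`); `f ∈ H¹_ν` iff this is finite. -/
def H1enorm (μ : MeasureTheory.Measure X) (φ : X → H) (ν : X → ℝ) (f : H) : ℝ≥0∞ :=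
  ∫⁻ x, (‖(inner ℂ (φ x) f : ℂ)‖₊ : ℝ≥0∞) * ENNReal.ofReal (ν x) ∂μ

/-- The frame kernel `R(x,y) = ⟨φ_y, φ_x⟩` (paper convention), i.e. `⟪φ x, φ y⟫_ℂ`. -/
def frameKer (φ : X → H) (x y : X) : ℂ := inner ℂ (φ x) (φ y)

/-- The `A_{m_ν}` norm of a complex kernel. -/
def AmNormC (μ : MeasureTheory.Measure X) (ν : X → ℝ) (K : X → X → ℂ) : ℝ≥0∞ :=
  max
    (essSup (fun x => ∫⁻ y, (‖K x y‖₊ : ℝ≥0∞) *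
      ENNReal.ofReal (max (ν x / ν y) (ν y / ν x)) ∂μ) μ)
    (essSup (fun y => ∫⁻ x, (‖K x y‖₊ : ℝ≥0∞) *
      ENNReal.ofReal (max (ν x / ν y) (ν y / ν x)) ∂μ) μ)

/-- The `A_{m_ν}` norm of a nonnegative kernel. -/
def AmNormE (μ : MeasureTheory.Measure X) (ν : X → ℝ) (K : X → X → ℝ≥0∞) : ℝ≥0∞ :=
  max
    (essSup (fun x => ∫⁻ y, K x y *
      ENNReal.ofReal (max (ν x / ν y) (ν y / ν x)) ∂μ) μ)
    (essSup (fun y => ∫⁻ x, K x y *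
      ENNReal.ofReal (max (ν x / ν y) (ν y / ν x)) ∂μ) μ)

/-- `ℓ : H → ℂ` is a bounded conjugate-linear functional on `H¹_ν`. -/
def IsBCF (μ : MeasureTheory.Measure X) (φ : X → H) (ν : X → ℝ) (L : H → ℂ) : Prop :=
  (∀ g h : H, H1enorm μ φ ν g ≠ ⊤ → H1enorm μ φ ν h ≠ ⊤ → L (g + h) = L g + L h) ∧
  (∀ (a : ℂ) (h : H), H1enorm μ φ ν h ≠ ⊤ → L (a • h) = (starRingEnd ℂ) a * L h) ∧
  (∃ C : ℝ≥0∞, C ≠ ⊤ ∧ ∀ h : H, H1enorm μ φ ν h ≠ ⊤ →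
    (‖L h‖₊ : ℝ≥0∞) ≤ C * H1enorm μ φ ν h)

/-- The action of the frame kernel `R` as an integral operator,
`R F (x) = ∫ R(x,y) F(y) dμ(y)`. -/
def Rop (μ : MeasureTheory.Measure X) (φ : X → H) (F : X → ℂ) (x : X) : ℂ :=
  ∫ y, frameKer φ x y * F y ∂μ

/-- A complex kernel `K` acts boundedly on `Y` with operator quasi-norm (at most) `CK`. -/
def KernelBddC (μ : MeasureTheory.Measure X) (Q : QBF X μ) (K : X → X → ℂ)
    (CK : ℝ≥0∞) : Prop :=
  ∀ F : X → ℂ, Measurable F → Q.N (fun x => (‖F x‖₊ : ℝ≥0∞)) ≠ ⊤ →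
    (∀ᵐ x ∂μ, MeasureTheory.Integrable (fun y => K x y * F y) μ) ∧
    Q.N (fun x => (‖∫ y, K x y * F y ∂μ‖₊ : ℝ≥0∞)) ≤
      CK * Q.N (fun x => (‖F x‖₊ : ℝ≥0∞))

/-- A nonnegative kernel `K` acts boundedly on `Y` with operator quasi-norm (at most) `CK`. -/
def KernelBddE (μ : MeasureTheory.Measure X) (Q : QBF X μ) (K : X → X → ℝ≥0∞)
    (CK : ℝ≥0∞) : Prop :=
  ∀ F : X → ℝ≥0∞, Measurable F → Q.N F ≠ ⊤ →
    Q.N (fun x => ∫⁻ y, K x y * F y ∂μ) ≤ CK * Q.N F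

/-- `Q_y`: the union of all covering sets `Uᵢ` containing `y`. -/
def Qset {I : Type*} (U : I → Set X) (y : X) : Set X := ⋃ i ∈ {i : I | y ∈ U i}, U i

theorem enorm_inner_symm {𝕜 E : Type*} [RCLike 𝕜] [SeminormedAddCommGroup E]
    [InnerProductSpace 𝕜 E] (v w : E) : ‖(inner 𝕜 v w : 𝕜)‖ₑ = ‖(inner 𝕜 w v : 𝕜)‖ₑ := by
  rw [← inner_conj_symm, RCLike.enorm_conj]

namespace QBF

variable {α : Type*} [MeasurableSpace α] {μ : Measure α}

/-- Solidity and homogeneity give `⊤ * ‖χ_{f = ⊤} | Y‖ ≤ ‖f | Y‖`. -/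
theorem ae_ne_top (Q : QBF α μ) {f : α → ℝ≥0∞} (hf : Measurable f) (hfin : Q.N f ≠ ⊤) :
    ∀ᵐ x ∂μ, f x ≠ ⊤ := by
  set A := {x | f x = ⊤}
  have hA : MeasurableSet A := hf (measurableSet_singleton ⊤)
  have hχ : Measurable (A.indicator fun _ => (1 : ℝ≥0∞)) := measurable_const.indicator hA
  have htop : ⊤ * Q.N (A.indicator fun _ => 1) ≤ Q.N f := by
    rw [← Q.smul_eq ⊤ _ hχ]
    refine Q.mono _ _ (measurable_const.mul hχ) hf (ae_of_all _ fun x => ?_)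
    by_cases hx : x ∈ A
    · simp [Set.indicator_of_mem hx, show f x = ⊤ from hx]
    · simp [Set.indicator_of_notMem hx]
  have hχ0 : Q.N (A.indicator fun _ => 1) = 0 := by
    by_contra h
    exact hfin (top_le_iff.1 (ENNReal.top_mul h ▸ htop))
  filter_upwards [Q.eq_zero _ hχ hχ0] with x hx hxA
  simp [Set.indicator_of_mem (show x ∈ A from hxA)] at hx

end QBF

namespace AdmissibleCovering

variable {I : Type*} {U : I → Set X} {σ : ℕ}

theorem countable [SigmaCompactSpace X] (hU : AdmissibleCovering U σ) : Countable I :=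
  Set.countable_univ_iff.1 <|
    hU.locFin.countable_univ fun i => (hU.interior_nonempty i).mono interior_subset

theorem measure_ne_zero (hsupp : ∀ V : Set X, IsOpen V → V.Nonempty → 0 < μ V)
    (hU : AdmissibleCovering U σ) (i : I) : μ (U i) ≠ 0 :=
  ((hsupp _ isOpen_interior (hU.interior_nonempty i)).trans_le
    (measure_mono interior_subset)).ne'

theorem measure_ne_top [IsFiniteMeasureOnCompacts μ] (hU : AdmissibleCovering U σ) (i : I) :
    μ (U i) ≠ ⊤ :=
  ((measure_mono subset_closure).trans_lt (hU.rel_compact i).measure_lt_top).ne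

end AdmissibleCovering

/-- Spreading each term `c i * a i` uniformly over `U i` turns the series into an integral. -/
theorem tsum_mul_le_lintegral_mul_tsum_indicator {α ι : Type*} [MeasurableSpace α]
    {μ : Measure α} [Countable ι] {U : ι → Set α} (hmeas : ∀ i, MeasurableSet (U i))
    (h0 : ∀ i, μ (U i) ≠ 0) (htop : ∀ i, μ (U i) ≠ ⊤) {c a : ι → ℝ≥0∞} {k : α → ℝ≥0∞}
    (hk : ∀ i, ∀ y ∈ U i, a i ≤ k y) :
    ∑' i, c i * a i ≤ ∫⁻ y, k y * ∑' i, (U i).indicator (fun _ => c i / μ (U i)) y ∂μ := by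
  have hterm : ∀ i y, (U i).indicator (fun _ => a i * (c i / μ (U i))) y ≤
      k y * (U i).indicator (fun _ => c i / μ (U i)) y := by
    intro i y
    by_cases hy : y ∈ U i
    · simp only [Set.indicator_of_mem hy]
      exact mul_le_mul_left (hk i y hy) _
    · simp [Set.indicator_of_notMem hy]
  calc ∑' i, c i * a i
      = ∑' i, ∫⁻ y, (U i).indicator (fun _ => a i * (c i / μ (U i))) y ∂μ := by
        refine tsum_congr fun i => ?_
        rw [lintegral_indicator_const (hmeas i), mul_assoc, ENNReal.div_mul_cancel (h0 i) (htop i),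
          mul_comm]
    _ = ∫⁻ y, ∑' i, (U i).indicator (fun _ => a i * (c i / μ (U i))) y ∂μ :=
        (lintegral_tsum fun i => (measurable_const.indicator (hmeas i)).aemeasurable).symm
    _ ≤ ∫⁻ y, k y * ∑' i, (U i).indicator (fun _ => c i / μ (U i)) y ∂μ :=
        lintegral_mono fun y => by
          rw [← ENNReal.tsum_mul_left]
          exact ENNReal.tsum_le_tsum fun i => hterm i y

/-- By continuity in `b`, the supremum over a countable dense subset of `A` is already the
supremum over `A`. -/
theorem Measurable.biSup_of_isSeparable {α β : Type*} [MeasurableSpace α] [TopologicalSpace β]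
    [TopologicalSpace.PseudoMetrizableSpace β] {A : Set β} (hA : TopologicalSpace.IsSeparable A)
    {f : β → α → ℝ≥0∞} (hmeas : ∀ b, Measurable (f b)) (hcont : ∀ a, Continuous fun b => f b a) :
    Measurable fun a => ⨆ b ∈ A, f b a := by
  obtain ⟨D, hDA, hDc, hAD⟩ := hA.exists_countable_dense_subset
  have hD : (fun a => ⨆ b ∈ A, f b a) = fun a => ⨆ b ∈ D, f b a := by
    funext a
    refine le_antisymm (iSup₂_le fun b hb => ?_) (biSup_mono hDA)
    have hclosed : IsClosed {b | f b a ≤ ⨆ d ∈ D, f d a} := isClosed_le (hcont a) continuous_const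
    exact closure_minimal (fun d hd => le_biSup (fun d => f d a) hd) hclosed (hAD hb)
  rw [hD]
  exact Measurable.biSup D hDc fun b _ => hmeas b

theorem measurable_iSup_enorm_inner {α E : Type*} [MeasurableSpace α] [NormedAddCommGroup E]
    [InnerProductSpace ℂ E] [TopologicalSpace.SeparableSpace E] {φ : α → E}
    (hφ : ∀ f : E, Measurable fun x => (inner ℂ (φ x) f : ℂ)) (ψ : α → E) (s : Set α) :
    Measurable fun x => ⨆ z ∈ s, ‖(inner ℂ (ψ z) (φ x) : ℂ)‖ₑ := by
  have hmeas : ∀ v : E, Measurable fun x => ‖(inner ℂ v (φ x) : ℂ)‖ₑ := fun v => by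
    simpa only [enorm_inner_symm v] using (hφ v).enorm
  simpa only [iSup_image] using Measurable.biSup_of_isSeparable (.of_separableSpace (ψ '' s))
    hmeas fun x => (continuous_id.inner continuous_const).enorm

section Qset

variable {α I : Type*} (U : I → Set α)

theorem iSup_mem_Qset_eq (g : α → ℝ≥0∞) (y : α) :
    ⨆ z ∈ Qset U y, g z = ⨆ i, (U i).indicator (fun _ => ⨆ z ∈ U i, g z) y := by
  simp only [Qset, iSup_iUnion]
  refine iSup_congr fun i => ?_
  by_cases hy : y ∈ U i <;> simp [hy]

variable {U}

theorem measurable_uncurry_iSup_Qset [MeasurableSpace α] [Countable I]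
    (hU : ∀ i, MeasurableSet (U i)) {g : α → α → ℝ≥0∞}
    (hg : ∀ i, Measurable fun x => ⨆ z ∈ U i, g x z) :
    Measurable (Function.uncurry fun x y => ⨆ z ∈ Qset U y, g x z) := by
  simp only [Function.uncurry_def, iSup_mem_Qset_eq]
  exact Measurable.iSup fun i => ((hg i).comp measurable_fst).indicator (measurable_snd (hU i))

end Qset

theorem synthesis_estimate_general
    [SigmaCompactSpace X]
    [IsFiniteMeasureOnCompacts μ]
    [TopologicalSpace.SeparableSpace H]
    (hsupp : ∀ V : Set X, IsOpen V → V.Nonempty → 0 < μ V)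
    (Q : QBF X μ)
    (φ : X → H)
    -- condition (F):
    (hVmeas : ∀ f : H, Measurable fun x => (inner ℂ (φ x) f : ℂ))
    -- admissible covering:
    {I : Type*} (U : I → Set X) (σ : ℕ) (hU : AdmissibleCovering U σ)
    -- the synthesizing family `ψ` and its maximal Gramian kernel `K`:
    (ψ : X → H)
    (CK : ℝ≥0∞) (hCK : CK ≠ ⊤)
    (hK : KernelBddE μ Q
      (fun x y => ⨆ z ∈ Qset U y, (‖(inner ℂ (ψ z) (φ x) : ℂ)‖₊ : ℝ≥0∞)) CK)
    -- coefficients and sampling points: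
    (lam : I → ℂ) (hlam : natN Q U lam ≠ ⊤)
    (xi : I → X) (hxi : ∀ i, xi i ∈ U i) :
    (∀ᵐ x ∂μ, Summable fun i => ‖lam i‖ * ‖(inner ℂ (φ x) (ψ (xi i)) : ℂ)‖) ∧
    Q.N (fun x => (‖∑' i, lam i * (inner ℂ (φ x) (ψ (xi i)) : ℂ)‖₊ : ℝ≥0∞)) ≤
      CK * natN Q U lam := by
  have := hU.countable
  set G : X → ℝ≥0∞ := fun y => ∑' i, (U i).indicator (fun _ => ‖lam i‖ₑ / μ (U i)) y
  set Kf : X → X → ℝ≥0∞ := fun x y => ⨆ z ∈ Qset U y, ‖(inner ℂ (ψ z) (φ x) : ℂ)‖ₑ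
  set S : X → ℝ≥0∞ := fun x => ∑' i, ‖lam i‖ₑ * ‖(inner ℂ (φ x) (ψ (xi i)) : ℂ)‖ₑ
  have hG : Measurable G := Measurable.tsum fun i => measurable_const.indicator (hU.meas i)
  have hS : Measurable S := Measurable.tsum fun i => measurable_const.mul (hVmeas _).enorm
  have hS_le : ∀ x, S x ≤ ∫⁻ y, Kf x y * G y ∂μ := fun x =>
    tsum_mul_le_lintegral_mul_tsum_indicator hU.meas (hU.measure_ne_zero hsupp) hU.measure_ne_top
      fun i y hy => (enorm_inner_symm _ _).trans_le <|
        le_biSup (fun z => ‖(inner ℂ (ψ z) (φ x) : ℂ)‖ₑ) (Set.mem_biUnion hy (hxi i))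
  have hT : Measurable fun x => ∫⁻ y, Kf x y * G y ∂μ :=
    ((measurable_uncurry_iSup_Qset hU.meas fun i => measurable_iSup_enorm_inner hVmeas ψ (U i)).mul
      (hG.comp measurable_snd)).lintegral_prod_right'
  have hNS : Q.N S ≤ CK * natN Q U lam :=
    (Q.mono _ _ hS hT (ae_of_all _ hS_le)).trans (hK G hG hlam)
  refine ⟨?_, le_trans (Q.mono _ _ ?_ hS (ae_of_all _ fun x => ?_)) hNS⟩
  · filter_upwards [Q.ae_ne_top hS (ne_top_of_le_ne_top (ENNReal.mul_ne_top hCK hlam) hNS)]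
      with x hx
    simp only [S, ← enorm_mul] at hx
    simpa only [norm_mul] using tsum_enorm_ne_top_iff_summable_norm.1 hx
  · exact (Measurable.tsum fun i => measurable_const.mul (hVmeas _)).enorm
  · simp only [S, ← enorm_mul]
    exact enorm_tsum_le_tsum_enorm

/-- key synthesis lemma. Let the frame have property `F(ν,Y)`, let `U` be
an admissible covering and `(ψ_z)` a family in `H` whose maximal Gramian kernel
`K(x,y) = sup_{z ∈ Q_y} |⟨φ_x, ψ_z⟩|` acts boundedly on `Y` with operator quasi-norm (at
most) `CK`.  Then for every `λ ∈ Y♮(U)` and points `xᵢ ∈ Uᵢ`, the series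
`Σᵢ λᵢ ⟨ψ_{xᵢ}, φ_x⟩` converges absolutely for a.e. `x` and defines a function in `Y` of
quasi-norm `≤ CK ‖λ | Y♮‖`. -/
theorem synthesis_estimate
    [BorelSpace X] [T2Space X] [LocallyCompactSpace X] [SigmaCompactSpace X]
    [IsFiniteMeasureOnCompacts μ]
    [CompleteSpace H] [TopologicalSpace.SeparableSpace H]
    (hsupp : ∀ V : Set X, IsOpen V → V.Nonempty → 0 < μ V)
    (Q : QBF X μ)
    (hrich : ∀ K : Set X, IsCompact K → Q.N (K.indicator fun _ => 1) ≠ ⊤)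
    (φ : X → H)
    -- condition (F):
    (hVmeas : ∀ f : H, Measurable fun x => (inner ℂ (φ x) f : ℂ))
    (hParseval : ∀ f : H,
      ∫⁻ x, (‖(inner ℂ (φ x) f : ℂ)‖₊ : ℝ≥0∞) ^ 2 ∂μ = (‖f‖₊ : ℝ≥0∞) ^ 2)
    (ν : X → ℝ) (hν1 : ∀ x, 1 ≤ ν x) (hνmeas : Measurable ν)
    (CB : ℝ) (hCB : 0 < CB) (hφbd : ∀ x, ‖φ x‖ ≤ CB * ν x)
    (hRAm : AmNormC μ ν (frameKer φ) ≠ ⊤)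
    (hφH1 : ∀ x, H1enorm μ φ ν (φ x) ≠ ⊤)
    -- property `F(ν,Y)`:
    (CR : ℝ≥0∞) (hCR : CR ≠ ⊤) (hRY : KernelBddC μ Q (frameKer φ) CR)
    (C' : ℝ≥0∞) (hC' : C' ≠ ⊤)
    (hRinf : ∀ F : X → ℂ, Measurable F → Q.N (fun x => (‖F x‖₊ : ℝ≥0∞)) ≠ ⊤ →
      ∀ᵐ x ∂μ, (‖Rop μ φ F x‖₊ : ℝ≥0∞) ≤
        C' * ENNReal.ofReal (ν x) * Q.N (fun x => (‖F x‖₊ : ℝ≥0∞)))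
    -- admissible covering:
    {I : Type*} (U : I → Set X) (σ : ℕ) (hU : AdmissibleCovering U σ)
    -- the synthesizing family `ψ` and its maximal Gramian kernel `K`:
    (ψ : X → H)
    (CK : ℝ≥0∞) (hCK : CK ≠ ⊤)
    (hK : KernelBddE μ Q
      (fun x y => ⨆ z ∈ Qset U y, (‖(inner ℂ (ψ z) (φ x) : ℂ)‖₊ : ℝ≥0∞)) CK)
    -- coefficients and sampling points:
    (lam : I → ℂ) (hlam : natN Q U lam ≠ ⊤)
    (xi : I → X) (hxi : ∀ i, xi i ∈ U i) :
    (∀ᵐ x ∂μ, Summable fun i => ‖lam i‖ * ‖(inner ℂ (φ x) (ψ (xi i)) : ℂ)‖) ∧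
    Q.N (fun x => (‖∑' i, lam i * (inner ℂ (φ x) (ψ (xi i)) : ℂ)‖₊ : ℝ≥0∞)) ≤
      CK * natN Q U lam :=
  synthesis_estimate_general hsupp Q φ hVmeas U σ hU ψ CK hCK hK lam hlam xi hxi
end
end

section
/- Let Y be a rich solid QBF-space on X, assume the frame F has property F(ν,Y), let U = {U_i}_{i∈I} be an admissible covering of X, and assume the kernels M(x,y) := sup_{z∈Q_y} |⟨φ_x, φ_z⟩| and M*(x,y) := M(y,x) act boundedly on Y with operator quasi-norms |||M||| and |||M*|||. Let (Φ_i)_{i∈I} be a partition of unity subordinate to U (each Φ_i measurable, 0 ≤ Φ_i ≤ 1, Φ_i vanishes outside U_i, and Σ_{i∈I} Φ_i(x) = 1 for all x ∈ X), put c_i = ∫_X Φ_i dμ, and pick points x_i ∈ U_i. Then for every F ∈ Y satisfying F(x) = ∫_X R(x,y) F(y) dμ(y) for all x ∈ X, the series U_Φ F(x) := Σ_{i∈I} c_i F(x_i) R(x, x_i) converges absolutely for μ-a.e. x ∈ X, the function U_Φ F belongs to Y, satisfies U_Φ F = R(U_Φ F) μ-a.e., and ‖U_Φ F | Y‖ ≤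 σ(U) · |||M||| · |||M*||| · ‖F|Y‖. -/
open MeasureTheory Filter Topology
open scoped ENNReal NNReal

noncomputable section

variable {X : Type*} [TopologicalSpace X] [MeasurableSpace X] {μ : MeasureTheory.Measure X}

variable {H : Type*} [NormedAddCommGroup H] [InnerProductSpace ℂ H]

/-! For `y ∈ Uᵢ` the sample point `xᵢ` lies in `Q_y`, so the reproducing formula gives
`|F(xᵢ)| ≤ M*|F|(y)`, and `|R(x, xᵢ)| ≤ M(x, y)`. With `|cᵢ| ≤ ∫ Φᵢ` and `Σᵢ Φᵢ = 1` this dominates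
`Σᵢ |cᵢ F(xᵢ) R(x, xᵢ)|` pointwise by `M(M*|F|)(x)`, whose quasi-norm is at most
`|||M||| |||M*||| ‖F|Y‖`, and `σ(U) ≥ 1`. As the majorant lies in `Y` and `R` acts on `Y`,
`R` may be applied termwise, and each term is reproduced because `R ∘ R = R` by Parseval. -/

lemma enorm_frameKer_comm {X : Type*} (φ : X → H) (x y : X) :
    ‖frameKer φ x y‖ₑ = ‖frameKer φ y x‖ₑ := by
  rw [frameKer, ← inner_conj_symm, RCLike.enorm_conj, frameKer]

section Frame

variable {X : Type*} [MeasurableSpace X] {μ : Measure X} {φ : X → H}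

lemma measurable_frameKer_left (hVmeas : ∀ f : H, Measurable fun x => (inner ℂ (φ x) f : ℂ))
    (w : X) : Measurable fun x => frameKer φ x w :=
  hVmeas (φ w)

lemma measurable_frameKer_right (hVmeas : ∀ f : H, Measurable fun x => (inner ℂ (φ x) f : ℂ))
    (z : X) : Measurable (frameKer φ z) := by
  have h : frameKer φ z = fun x => starRingEnd ℂ (inner ℂ (φ x) (φ z)) :=
    funext fun x => (inner_conj_symm _ _).symm
  exact h ▸ Complex.continuous_conj.measurable.comp (hVmeas (φ z))

lemma eLpNorm_inner_eq_enorm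
    (hParseval : ∀ f : H,
      ∫⁻ x, (‖(inner ℂ (φ x) f : ℂ)‖₊ : ℝ≥0∞) ^ 2 ∂μ = (‖f‖₊ : ℝ≥0∞) ^ 2) (f : H) :
    eLpNorm (fun x => inner ℂ (φ x) f) 2 μ = ‖f‖ₑ := by
  rw [eLpNorm_eq_lintegral_rpow_enorm_toReal two_ne_zero ENNReal.ofNat_ne_top]
  simp only [ENNReal.toReal_ofNat, ENNReal.rpow_two, enorm_eq_nnnorm, hParseval]
  rw [← ENNReal.rpow_two, ← ENNReal.rpow_mul]
  norm_num

lemma memLp_inner (hVmeas : ∀ f : H, Measurable fun x => (inner ℂ (φ x) f : ℂ))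
    (hParseval : ∀ f : H,
      ∫⁻ x, (‖(inner ℂ (φ x) f : ℂ)‖₊ : ℝ≥0∞) ^ 2 ∂μ = (‖f‖₊ : ℝ≥0∞) ^ 2) (f : H) :
    MemLp (fun x => inner ℂ (φ x) f) 2 μ :=
  ⟨(hVmeas f).aestronglyMeasurable, (eLpNorm_inner_eq_enorm hParseval f).trans_lt enorm_lt_top⟩

def analysisOperator (hVmeas : ∀ f : H, Measurable fun x => (inner ℂ (φ x) f : ℂ))
    (hParseval : ∀ f : H,
      ∫⁻ x, (‖(inner ℂ (φ x) f : ℂ)‖₊ : ℝ≥0∞) ^ 2 ∂μ = (‖f‖₊ : ℝ≥0∞) ^ 2) :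
    H →ₗᵢ[ℂ] Lp ℂ 2 μ where
  toFun f := (memLp_inner hVmeas hParseval f).toLp
  map_add' f g := by
    rw [← MemLp.toLp_add]
    exact MemLp.toLp_congr _ _ (by filter_upwards with x using inner_add_right _ _ _)
  map_smul' a f := by
    rw [RingHom.id_apply, ← MemLp.toLp_const_smul]
    exact MemLp.toLp_congr _ _ (by filter_upwards with x using inner_smul_right _ _ _)
  norm_map' f := by
    change ‖(memLp_inner hVmeas hParseval f).toLp‖ = ‖f‖
    rw [Lp.norm_toLp, eLpNorm_inner_eq_enorm hParseval f, toReal_enorm]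

lemma integral_frameKer_mul_frameKer
    (hVmeas : ∀ f : H, Measurable fun x => (inner ℂ (φ x) f : ℂ))
    (hParseval : ∀ f : H,
      ∫⁻ x, (‖(inner ℂ (φ x) f : ℂ)‖₊ : ℝ≥0∞) ^ 2 ∂μ = (‖f‖₊ : ℝ≥0∞) ^ 2) (x w : X) :
    ∫ y, frameKer φ x y * frameKer φ y w ∂μ = frameKer φ x w := by
  let L := analysisOperator hVmeas hParseval
  have hL : ∀ f, L f =ᵐ[μ] fun y => inner ℂ (φ y) f :=
    fun f => (memLp_inner hVmeas hParseval f).coeFn_toLp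
  calc ∫ y, frameKer φ x y * frameKer φ y w ∂μ = ∫ y, inner ℂ (L (φ x) y) (L (φ w) y) ∂μ := by
        refine integral_congr_ae ?_
        filter_upwards [hL (φ x), hL (φ w)] with y hx hw
        rw [hx, hw, RCLike.inner_apply, inner_conj_symm, mul_comm]
        rfl
    _ = frameKer φ x w := by rw [← L2.inner_def, L.inner_map_map]; rfl

end Frame

lemma Measurable.lintegral_kernel_mul {X : Type*} [MeasurableSpace X] {μ : Measure X} [SFinite μ]
    {K : X → X → ℝ≥0∞} (hK : Measurable fun p : X × X => K p.1 p.2) {g : X → ℝ≥0∞}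
    (hg : Measurable g) : Measurable fun x => ∫⁻ y, K x y * g y ∂μ :=
  (hK.mul (hg.comp measurable_snd)).lintegral_prod_right'

section QuasiNorm

variable {X : Type*} [MeasurableSpace X] {μ : Measure X} (Q : QBF X μ)

lemma QBF.N_zero : Q.N (fun _ => 0) = 0 := by
  simpa using Q.smul_eq 0 (fun _ => 0) measurable_const

lemma QBF.ae_ne_top_s17 {f : X → ℝ≥0∞} (hf : Measurable f) (hN : Q.N f ≠ ⊤) :
    ∀ᵐ x ∂μ, f x ≠ ⊤ := by
  set A := {x | f x = ⊤}
  have hA : Measurable (A.indicator fun _ => (1 : ℝ≥0∞)) :=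
    measurable_const.indicator (hf (measurableSet_singleton ⊤))
  -- `⊤ • 𝟙_A ≤ f`, so `⊤ * N 𝟙_A ≤ N f < ⊤` forces `N 𝟙_A = 0`
  have hle : ⊤ * Q.N (A.indicator fun _ => 1) ≤ Q.N f := by
    rw [← Q.smul_eq _ _ hA]
    refine Q.mono _ _ (hA.const_mul _) hf (ae_of_all _ fun x => ?_)
    by_cases hx : x ∈ A <;> simp_all [A]
  have hA0 : Q.N (A.indicator fun _ => 1) = 0 := by
    by_contra h
    exact hN (top_le_iff.mp (ENNReal.top_mul h ▸ hle))
  filter_upwards [Q.eq_zero _ hA hA0] with x hx hfx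
  simp [A, hfx] at hx

variable {Q}

lemma KernelBddE.comp [SFinite μ] {K L : X → X → ℝ≥0∞} {CK CL : ℝ≥0∞}
    (hK : KernelBddE μ Q K CK) (hL : KernelBddE μ Q L CL) (hCL : CL ≠ ⊤)
    (hLm : Measurable fun p : X × X => L p.1 p.2) {f : X → ℝ≥0∞} (hf : Measurable f)
    (hN : Q.N f ≠ ⊤) :
    Q.N (fun x => ∫⁻ y, K x y * ∫⁻ t, L y t * f t ∂μ ∂μ) ≤ CK * CL * Q.N f := by
  have hLf : Measurable fun y => ∫⁻ t, L y t * f t ∂μ := hLm.lintegral_kernel_mul hf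
  have hLN := hL f hf hN
  calc _ ≤ CK * Q.N (fun y => ∫⁻ t, L y t * f t ∂μ) :=
        hK _ hLf (ne_top_of_le_ne_top (ENNReal.mul_ne_top hCL hN) hLN)
    _ ≤ CK * (CL * Q.N f) := by gcongr
    _ = CK * CL * Q.N f := (mul_assoc _ _ _).symm

lemma KernelBddC.ae_lintegral_enorm_mul_ne_top {K : X → X → ℂ} {CK : ℝ≥0∞}
    (hK : KernelBddC μ Q K CK) {f : X → ℝ≥0∞} (hf : Measurable f) (hN : Q.N f ≠ ⊤) :
    ∀ᵐ x ∂μ, ∫⁻ y, ‖K x y‖ₑ * f y ∂μ ≠ ⊤ := by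
  set g : X → ℂ := fun y => ((f y).toReal : ℂ)
  have hgm : Measurable g := Complex.measurable_ofReal.comp hf.ennreal_toReal
  have hg : ∀ y, ‖g y‖ₑ = ENNReal.ofReal (f y).toReal := fun y => by
    rw [enorm_eq_nnnorm, Complex.nnnorm_real, ← enorm_eq_nnnorm,
      Real.enorm_of_nonneg ENNReal.toReal_nonneg]
  have hgN : Q.N (fun y => ‖g y‖ₑ) ≠ ⊤ :=
    ne_top_of_le_ne_top hN <| Q.mono _ _ hgm.enorm hf
      (ae_of_all _ fun y => (hg y).trans_le ENNReal.ofReal_toReal_le)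
  have hfg : ∀ x, ∫⁻ y, ‖K x y‖ₑ * f y ∂μ = ∫⁻ y, ‖K x y * g y‖ₑ ∂μ := fun x =>
    lintegral_congr_ae <| (Q.ae_ne_top_s17 hf hN).mono fun y hy => by
      dsimp only
      rw [enorm_mul, hg, ENNReal.ofReal_toReal hy]
  filter_upwards [(hK g hgm hgN).1] with x hx
  exact hfg x ▸ hx.hasFiniteIntegral.ne

end QuasiNorm

lemma integral_mul_tsum_of_lintegral_ne_top {X ι 𝕜 : Type*} [MeasurableSpace X] {μ : Measure X}
    [Countable ι] [RCLike 𝕜] {k : X → 𝕜} {T : ι → X → 𝕜} (hk : AEStronglyMeasurable k μ)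
    (hT : ∀ i, AEStronglyMeasurable (T i) μ)
    (hfin : ∫⁻ y, ‖k y‖ₑ * ∑' i, ‖T i y‖ₑ ∂μ ≠ ⊤) :
    ∫ y, k y * ∑' i, T i y ∂μ = ∑' i, ∫ y, k y * T i y ∂μ := by
  simp_rw [← tsum_mul_left]
  refine integral_tsum (f := fun i y => k y * T i y) (fun i => hk.mul (hT i)) ?_
  rw [← lintegral_tsum (f := fun i y => ‖k y * T i y‖ₑ) fun i => (hk.mul (hT i)).enorm]
  simpa only [enorm_mul, ENNReal.tsum_mul_left] using hfin

lemma exists_countable_subset_biSup_comp_eq {Z E α : Type*} [TopologicalSpace E]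
    [TopologicalSpace.PseudoMetrizableSpace E] [TopologicalSpace.SeparableSpace E]
    [CompleteLattice α] [TopologicalSpace α] [OrderClosedTopology α] (ψ : Z → E) (s : Set Z) :
    ∃ t ⊆ s, t.Countable ∧
      ∀ g : E → α, Continuous g → ⨆ z ∈ s, g (ψ z) = ⨆ z ∈ t, g (ψ z) := by
  obtain ⟨c, hcs, hcc, hsc⟩ :=
    (TopologicalSpace.IsSeparable.of_separableSpace (ψ '' s)).exists_countable_dense_subset
  obtain ⟨t, hts, hbij⟩ := Set.SurjOn.exists_bijOn_subset hcs
  refine ⟨t, hts, Set.countable_of_injective_of_countable_image hbij.injOn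
    (hbij.image_eq ▸ hcc), fun g hg => le_antisymm ?_ (biSup_mono fun z hz => hts hz)⟩
  refine iSup₂_le fun z hz => ?_
  have hclosed : IsClosed {e | g e ≤ ⨆ z ∈ t, g (ψ z)} := isClosed_le hg continuous_const
  refine closure_minimal (fun e he => ?_) hclosed (hsc ⟨z, hz, rfl⟩)
  obtain ⟨z', hz', rfl⟩ := hbij.image_eq ▸ he
  exact le_biSup (fun z => g (ψ z)) hz'

lemma iSup_mem_Qset {X I α : Type*} [CompleteLattice α] (U : I → Set X) (y : X) (f : X → α) :
    ⨆ z ∈ Qset U y, f z = ⨆ i, ⨆ (_ : y ∈ U i), ⨆ z ∈ U i, f z := by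
  simp only [Qset, iSup_iUnion, Set.mem_ofPred_eq]

lemma measurable_biSup_Qset {X Y I : Type*} [MeasurableSpace X] [MeasurableSpace Y] [Countable I]
    {U : I → Set X} (hU : ∀ i, MeasurableSet (U i)) {f : X → Y → ℝ≥0∞}
    (hf : ∀ i, Measurable fun y => ⨆ z ∈ U i, f z y) :
    Measurable fun p : X × Y => ⨆ z ∈ Qset U p.1, f z p.2 := by
  classical
  simp_rw [iSup_mem_Qset]
  refine Measurable.iSup fun i => ?_
  convert Measurable.ite ((hU i).preimage measurable_fst) ((hf i).comp measurable_snd)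
    measurable_const with p
  exact iSup_eq_if _

lemma mem_Qset {X I : Type*} {U : I → Set X} {i : I} {y z : X} (hy : y ∈ U i) (hz : z ∈ U i) :
    z ∈ Qset U y :=
  Set.mem_biUnion hy hz

section Covering

variable {X I : Type*} [TopologicalSpace X] [MeasurableSpace X] {U : I → Set X} {σ : ℕ}

lemma AdmissibleCovering.countable_s17 [SigmaCompactSpace X] (hU : AdmissibleCovering U σ) :
    Countable I :=
  Set.countable_univ_iff.mp <|
    hU.locFin.countable_univ fun i => (hU.interior_nonempty i).mono interior_subset

lemma AdmissibleCovering.one_le [Nonempty I] (hU : AdmissibleCovering U σ) : 1 ≤ σ := by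
  obtain ⟨i⟩ := ‹Nonempty I›
  have hi : i ∈ {j | (U i ∩ U j).Nonempty} := by
    simpa using (hU.interior_nonempty i).mono interior_subset
  exact ((Set.ncard_pos (hU.inter_finite i)).mpr ⟨i, hi⟩).trans_le (hU.inter_card_le i)

end Covering

section MaxKernel

variable {X I : Type*} {φ : X → H} {U : I → Set X}

/-- The kernel `M` of the paper; its `M*` is `fun x y => maxKernel U φ y x`. -/
def maxKernel (U : I → Set X) (φ : X → H) (x y : X) : ℝ≥0∞ :=
  ⨆ z ∈ Qset U y, ‖frameKer φ z x‖ₑ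

lemma enorm_frameKer_le_maxKernel {y z : X} (hz : z ∈ Qset U y) (x : X) :
    ‖frameKer φ x z‖ₑ ≤ maxKernel U φ x y := by
  rw [enorm_frameKer_comm]
  exact le_biSup (fun z => ‖frameKer φ z x‖ₑ) hz

variable [MeasurableSpace X]

lemma enorm_Rop_le_lintegral_maxKernel {μ : Measure X} {y z : X} (hz : z ∈ Qset U y)
    (F : X → ℂ) : ‖Rop μ φ F z‖ₑ ≤ ∫⁻ t, maxKernel U φ t y * ‖F t‖ₑ ∂μ := by
  refine (enorm_integral_le_lintegral_enorm _).trans (lintegral_mono fun t => ?_)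
  rw [enorm_mul]
  gcongr
  exact le_biSup (fun z => ‖frameKer φ z t‖ₑ) hz

-- `φ` need not be measurable into `H`; separability of `H` makes each supremum a countable one.
lemma measurable_maxKernel_swap [Countable I] [TopologicalSpace.SeparableSpace H]
    (hU : ∀ i, MeasurableSet (U i))
    (hVmeas : ∀ f : H, Measurable fun x => (inner ℂ (φ x) f : ℂ)) :
    Measurable fun p : X × X => maxKernel U φ p.2 p.1 := by
  refine measurable_biSup_Qset (f := fun z x => ‖frameKer φ z x‖ₑ) hU fun i => ?_
  obtain ⟨t, -, htc, ht⟩ := exists_countable_subset_biSup_comp_eq (α := ℝ≥0∞) φ (U i)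
  have h : ∀ x, ⨆ z ∈ U i, ‖frameKer φ z x‖ₑ = ⨆ z ∈ t, ‖frameKer φ z x‖ₑ := fun x =>
    ht (fun h => ‖inner ℂ h (φ x)‖ₑ) (continuous_id.inner continuous_const).enorm
  simp_rw [h]
  exact Measurable.biSup t htc fun z _ => (measurable_frameKer_right hVmeas z).enorm

lemma measurable_maxKernel [Countable I] [TopologicalSpace.SeparableSpace H]
    (hU : ∀ i, MeasurableSet (U i))
    (hVmeas : ∀ f : H, Measurable fun x => (inner ℂ (φ x) f : ℂ)) :
    Measurable fun p : X × X => maxKernel U φ p.1 p.2 :=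
  measurable_swap_iff.mp (measurable_maxKernel_swap hU hVmeas)

lemma measurable_lintegral_maxKernel_mul {μ : Measure X} [SFinite μ] [Countable I]
    [TopologicalSpace.SeparableSpace H] (hU : ∀ i, MeasurableSet (U i))
    (hVmeas : ∀ f : H, Measurable fun x => (inner ℂ (φ x) f : ℂ)) {g : X → ℝ≥0∞}
    (hg : Measurable g) : Measurable fun y => ∫⁻ t, maxKernel U φ t y * g t ∂μ :=
  (measurable_maxKernel_swap hU hVmeas).lintegral_kernel_mul (K := fun y t => maxKernel U φ t y) hg

end MaxKernel

section Discretization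

variable {X I : Type*} [MeasurableSpace X] {μ : Measure X} {φ : X → H} {U : I → Set X}
  {Φ : I → X → ℝ} {xi : I → X} {F : X → ℂ}

def discretizationTerm (μ : Measure X) (φ : X → H) (Φ : I → X → ℝ) (xi : I → X) (F : X → ℂ)
    (i : I) (x : X) : ℂ :=
  ((∫ y, Φ i y ∂μ : ℝ) : ℂ) * F (xi i) * frameKer φ x (xi i)

lemma measurable_discretizationTerm
    (hVmeas : ∀ f : H, Measurable fun x => (inner ℂ (φ x) f : ℂ)) (i : I) :
    Measurable (discretizationTerm μ φ Φ xi F i) :=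
  (measurable_frameKer_left hVmeas (xi i)).const_mul _

lemma integral_frameKer_mul_discretizationTerm
    (hVmeas : ∀ f : H, Measurable fun x => (inner ℂ (φ x) f : ℂ))
    (hParseval : ∀ f : H,
      ∫⁻ x, (‖(inner ℂ (φ x) f : ℂ)‖₊ : ℝ≥0∞) ^ 2 ∂μ = (‖f‖₊ : ℝ≥0∞) ^ 2) (i : I) (x : X) :
    ∫ y, frameKer φ x y * discretizationTerm μ φ Φ xi F i y ∂μ =
      discretizationTerm μ φ Φ xi F i x := by
  simp_rw [discretizationTerm, mul_left_comm (frameKer φ x _), integral_const_mul,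
    integral_frameKer_mul_frameKer hVmeas hParseval]

lemma enorm_discretizationTerm_le {i : I} (hΦm : Measurable (Φ i))
    (hΦsupp : ∀ x, x ∉ U i → Φ i x = 0) (hxi : xi i ∈ U i)
    (hFrep : F (xi i) = Rop μ φ F (xi i)) (x : X) :
    ‖discretizationTerm μ φ Φ xi F i x‖ₑ ≤
      ∫⁻ y, ‖Φ i y‖ₑ * (maxKernel U φ x y * ∫⁻ t, maxKernel U φ t y * ‖F t‖ₑ ∂μ) ∂μ := by
  have hc : ‖((∫ y, Φ i y ∂μ : ℝ) : ℂ)‖ₑ ≤ ∫⁻ y, ‖Φ i y‖ₑ ∂μ := by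
    rw [enorm_eq_nnnorm, Complex.nnnorm_real, ← enorm_eq_nnnorm]
    exact enorm_integral_le_lintegral_enorm _
  rw [discretizationTerm, mul_right_comm, enorm_mul, enorm_mul, mul_assoc]
  calc _ ≤ (∫⁻ y, ‖Φ i y‖ₑ ∂μ) * (‖frameKer φ x (xi i)‖ₑ * ‖F (xi i)‖ₑ) := by gcongr
    _ = ∫⁻ y, ‖Φ i y‖ₑ * (‖frameKer φ x (xi i)‖ₑ * ‖F (xi i)‖ₑ) ∂μ :=
      (lintegral_mul_const _ hΦm.enorm).symm
    _ ≤ _ := lintegral_mono fun y => ?_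
  by_cases hy : y ∈ U i
  · have hQ := mem_Qset hy hxi
    gcongr
    · exact enorm_frameKer_le_maxKernel hQ x
    · rw [hFrep]
      exact enorm_Rop_le_lintegral_maxKernel hQ F
  · simp [hΦsupp y hy]

variable [SFinite μ] [Countable I] [TopologicalSpace.SeparableSpace H]

lemma tsum_enorm_discretizationTerm_le (hU : ∀ i, MeasurableSet (U i))
    (hVmeas : ∀ f : H, Measurable fun x => (inner ℂ (φ x) f : ℂ))
    (hΦm : ∀ i, Measurable (Φ i)) (hΦ0 : ∀ i x, 0 ≤ Φ i x)
    (hΦsupp : ∀ i x, x ∉ U i → Φ i x = 0) (hΦsum : ∀ x, HasSum (fun i => Φ i x) 1)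
    (hxi : ∀ i, xi i ∈ U i) (hFm : Measurable F) (hFrep : ∀ x, F x = Rop μ φ F x) (x : X) :
    ∑' i, ‖discretizationTerm μ φ Φ xi F i x‖ₑ ≤
      ∫⁻ y, maxKernel U φ x y * ∫⁻ t, maxKernel U φ t y * ‖F t‖ₑ ∂μ ∂μ := by
  have hG := measurable_lintegral_maxKernel_mul (μ := μ) hU hVmeas hFm.enorm
  have hMx : Measurable (maxKernel U φ x) :=
    Measurable.of_uncurry_left (f := maxKernel U φ) (measurable_maxKernel hU hVmeas)
  have hsum_one : ∀ y, ∑' i, ‖Φ i y‖ₑ = 1 := fun y => by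
    simp_rw [Real.enorm_of_nonneg (hΦ0 _ y)]
    rw [← ENNReal.ofReal_tsum_of_nonneg (hΦ0 · y) (hΦsum y).summable, (hΦsum y).tsum_eq,
      ENNReal.ofReal_one]
  calc _ ≤ ∑' i, ∫⁻ y, ‖Φ i y‖ₑ *
        (maxKernel U φ x y * ∫⁻ t, maxKernel U φ t y * ‖F t‖ₑ ∂μ) ∂μ :=
      ENNReal.tsum_le_tsum fun i =>
        enorm_discretizationTerm_le (hΦm i) (hΦsupp i) (hxi i) (hFrep (xi i)) x
    _ = ∫⁻ y, ∑' i, ‖Φ i y‖ₑ *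
        (maxKernel U φ x y * ∫⁻ t, maxKernel U φ t y * ‖F t‖ₑ ∂μ) ∂μ :=
      (lintegral_tsum fun i => ((hΦm i).enorm.mul (hMx.mul hG)).aemeasurable).symm
    _ = _ := by simp_rw [ENNReal.tsum_mul_right, hsum_one, one_mul]

lemma N_tsum_enorm_discretizationTerm_le {Q : QBF X μ} {CM CMs : ℝ≥0∞}
    (hM : KernelBddE μ Q (maxKernel U φ) CM)
    (hMs : KernelBddE μ Q (fun x y => maxKernel U φ y x) CMs) (hCMs : CMs ≠ ⊤)
    (hU : ∀ i, MeasurableSet (U i))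
    (hVmeas : ∀ f : H, Measurable fun x => (inner ℂ (φ x) f : ℂ))
    (hΦm : ∀ i, Measurable (Φ i)) (hΦ0 : ∀ i x, 0 ≤ Φ i x)
    (hΦsupp : ∀ i x, x ∉ U i → Φ i x = 0) (hΦsum : ∀ x, HasSum (fun i => Φ i x) 1)
    (hxi : ∀ i, xi i ∈ U i) (hFm : Measurable F) (hFY : Q.N (fun x => ‖F x‖ₑ) ≠ ⊤)
    (hFrep : ∀ x, F x = Rop μ φ F x) :
    Q.N (fun x => ∑' i, ‖discretizationTerm μ φ Φ xi F i x‖ₑ) ≤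
      CM * CMs * Q.N (fun x => ‖F x‖ₑ) := by
  have hW : Measurable fun x => ∫⁻ y, maxKernel U φ x y * ∫⁻ t, maxKernel U φ t y * ‖F t‖ₑ ∂μ ∂μ :=
    (measurable_maxKernel hU hVmeas).lintegral_kernel_mul
      (measurable_lintegral_maxKernel_mul hU hVmeas hFm.enorm)
  refine le_trans (Q.mono _ _ ?_ hW (ae_of_all _ fun x =>
    tsum_enorm_discretizationTerm_le hU hVmeas hΦm hΦ0 hΦsupp hΦsum hxi hFm hFrep x)) ?_
  · exact Measurable.tsum fun i => (measurable_discretizationTerm hVmeas i).enorm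
  · exact hM.comp hMs hCMs (measurable_maxKernel_swap hU hVmeas) hFm.enorm hFY

end Discretization

theorem discretization_operator_bounded_general
    [SigmaCompactSpace X]
    [IsFiniteMeasureOnCompacts μ]
    [TopologicalSpace.SeparableSpace H]
    (Q : QBF X μ)
    (φ : X → H)
    -- condition (F):
    (hVmeas : ∀ f : H, Measurable fun x => (inner ℂ (φ x) f : ℂ))
    (hParseval : ∀ f : H,
      ∫⁻ x, (‖(inner ℂ (φ x) f : ℂ)‖₊ : ℝ≥0∞) ^ 2 ∂μ = (‖f‖₊ : ℝ≥0∞) ^ 2)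
    -- property `F(ν,Y)`:
    (CR : ℝ≥0∞) (hRY : KernelBddC μ Q (frameKer φ) CR)
    -- admissible covering:
    {I : Type*} (U : I → Set X) (σ : ℕ) (hU : AdmissibleCovering U σ)
    -- boundedness of the maximal kernels `M` and `M*` on `Y`:
    (CM CMs : ℝ≥0∞) (hCM : CM ≠ ⊤) (hCMs : CMs ≠ ⊤)
    (hM : KernelBddE μ Q
      (fun x y => ⨆ z ∈ Qset U y, (‖frameKer φ z x‖₊ : ℝ≥0∞)) CM)
    (hMs : KernelBddE μ Q
      (fun x y => ⨆ z ∈ Qset U x, (‖frameKer φ z y‖₊ : ℝ≥0∞)) CMs)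
    -- partition of unity subordinate to `U` and sampling points:
    (Φ : I → X → ℝ) (hΦmeas : ∀ i, Measurable (Φ i))
    (hΦ0 : ∀ i x, 0 ≤ Φ i x)
    (hΦsupp : ∀ i x, x ∉ U i → Φ i x = 0)
    (hΦsum : ∀ x, HasSum (fun i => Φ i x) 1)
    (xi : I → X) (hxi : ∀ i, xi i ∈ U i)
    -- `F ∈ Y` satisfying the reproducing formula pointwise:
    (F : X → ℂ) (hFmeas : Measurable F)
    (hFY : Q.N (fun x => (‖F x‖₊ : ℝ≥0∞)) ≠ ⊤)
    (hFrep : ∀ x, F x = Rop μ φ F x) :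
    -- absolute convergence a.e.:
    (∀ᵐ x ∂μ, Summable fun i =>
        ‖((∫ y, Φ i y ∂μ : ℝ) : ℂ) * F (xi i) * frameKer φ x (xi i)‖) ∧
    -- `U_Φ F ∈ Y` with the quasi-norm bound:
    Q.N (fun x =>
        (‖∑' i, ((∫ y, Φ i y ∂μ : ℝ) : ℂ) * F (xi i) * frameKer φ x (xi i)‖₊ : ℝ≥0∞)) ≤
      (σ : ℝ≥0∞) * CM * CMs * Q.N (fun x => (‖F x‖₊ : ℝ≥0∞)) ∧
    -- `U_Φ F` lies in the range of `R`: `U_Φ F = R (U_Φ F)` a.e.: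
    (∀ᵐ x ∂μ,
      (∑' i, ((∫ y, Φ i y ∂μ : ℝ) : ℂ) * F (xi i) * frameKer φ x (xi i)) =
        Rop μ φ
          (fun x' => ∑' i, ((∫ y, Φ i y ∂μ : ℝ) : ℂ) * F (xi i) * frameKer φ x' (xi i))
          x) := by
  have : Countable I := hU.countable_s17
  have hT := measurable_discretizationTerm (μ := μ) (Φ := Φ) (xi := xi) (F := F) hVmeas
  set S := fun x => ∑' i, ‖discretizationTerm μ φ Φ xi F i x‖ₑ
  have hSm : Measurable S := Measurable.tsum fun i => (hT i).enorm
  have hSN : Q.N S ≤ CM * CMs * Q.N (fun x => ‖F x‖ₑ) :=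
    N_tsum_enorm_discretizationTerm_le hM hMs hCMs hU.meas hVmeas hΦmeas hΦ0 hΦsupp hΦsum hxi
      hFmeas hFY hFrep
  have hSfin : Q.N S ≠ ⊤ :=
    ne_top_of_le_ne_top (ENNReal.mul_ne_top (ENNReal.mul_ne_top hCM hCMs) hFY) hSN
  refine ⟨?_, ?_, ?_⟩
  · filter_upwards [Q.ae_ne_top_s17 hSm hSfin] with x hx
    exact tsum_enorm_ne_top_iff_summable_norm.mp hx
  · have hσ : Q.N S ≤ σ * CM * CMs * Q.N (fun x => ‖F x‖ₑ) := by
      rcases isEmpty_or_nonempty I with hI | hI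
      · simp [S, Q.N_zero]
      · calc Q.N S ≤ CM * CMs * Q.N (fun x => ‖F x‖ₑ) := hSN
          _ ≤ σ * (CM * CMs * Q.N (fun x => ‖F x‖ₑ)) :=
            le_mul_of_one_le_left' (by exact_mod_cast hU.one_le)
          _ = σ * CM * CMs * Q.N (fun x => ‖F x‖ₑ) := by ring
    refine le_trans (Q.mono _ _ (Measurable.tsum hT).enorm hSm
      (ae_of_all _ fun x => enorm_tsum_le_tsum_enorm)) hσ
  · filter_upwards [hRY.ae_lintegral_enorm_mul_ne_top hSm hSfin] with x hx
    change ∑' i, discretizationTerm μ φ Φ xi F i x =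
      ∫ y, frameKer φ x y * ∑' i, discretizationTerm μ φ Φ xi F i y ∂μ
    rw [integral_mul_tsum_of_lintegral_ne_top
      (measurable_frameKer_right hVmeas x).aestronglyMeasurable
      (fun i => (hT i).aestronglyMeasurable) hx]
    exact tsum_congr fun i => (integral_frameKer_mul_discretizationTerm hVmeas hParseval i x).symm

/-- If the maximal kernels `M(x,y) = sup_{z∈Q_y}|⟨φ_x,φ_z⟩|` and
`M*(x,y) = M(y,x)` act boundedly on `Y`, then for any partition of unity `(Φᵢ)` subordinate
to the admissible covering `U`, any points `xᵢ ∈ Uᵢ` and any `F ∈ Y` satisfying the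
reproducing formula `F = R(F)` pointwise, the discretization
`U_Φ F = Σᵢ cᵢ F(xᵢ) R(·, xᵢ)` (with `cᵢ = ∫ Φᵢ dμ`) converges absolutely a.e., belongs to
`R(Y)` (i.e. lies in `Y` and satisfies `U_Φ F = R(U_Φ F)` a.e.), and
`‖U_Φ F | Y‖ ≤ σ(U) |||M||| |||M*||| ‖F | Y‖`. -/
theorem discretization_operator_bounded
    [BorelSpace X] [T2Space X] [LocallyCompactSpace X] [SigmaCompactSpace X]
    [IsFiniteMeasureOnCompacts μ]
    [CompleteSpace H] [TopologicalSpace.SeparableSpace H]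
    (hsupp : ∀ V : Set X, IsOpen V → V.Nonempty → 0 < μ V)
    (Q : QBF X μ)
    (hrich : ∀ K : Set X, IsCompact K → Q.N (K.indicator fun _ => 1) ≠ ⊤)
    (φ : X → H)
    -- condition (F):
    (hVmeas : ∀ f : H, Measurable fun x => (inner ℂ (φ x) f : ℂ))
    (hParseval : ∀ f : H,
      ∫⁻ x, (‖(inner ℂ (φ x) f : ℂ)‖₊ : ℝ≥0∞) ^ 2 ∂μ = (‖f‖₊ : ℝ≥0∞) ^ 2)
    (ν : X → ℝ) (hν1 : ∀ x, 1 ≤ ν x) (hνmeas : Measurable ν)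
    (CB : ℝ) (hCB : 0 < CB) (hφbd : ∀ x, ‖φ x‖ ≤ CB * ν x)
    (hRAm : AmNormC μ ν (frameKer φ) ≠ ⊤)
    (hφH1 : ∀ x, H1enorm μ φ ν (φ x) ≠ ⊤)
    -- property `F(ν,Y)`:
    (CR : ℝ≥0∞) (hCR : CR ≠ ⊤) (hRY : KernelBddC μ Q (frameKer φ) CR)
    (C' : ℝ≥0∞) (hC' : C' ≠ ⊤)
    (hRinf : ∀ F : X → ℂ, Measurable F → Q.N (fun x => (‖F x‖₊ : ℝ≥0∞)) ≠ ⊤ →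
      ∀ᵐ x ∂μ, (‖Rop μ φ F x‖₊ : ℝ≥0∞) ≤
        C' * ENNReal.ofReal (ν x) * Q.N (fun x => (‖F x‖₊ : ℝ≥0∞)))
    -- admissible covering:
    {I : Type*} (U : I → Set X) (σ : ℕ) (hU : AdmissibleCovering U σ)
    -- boundedness of the maximal kernels `M` and `M*` on `Y`:
    (CM CMs : ℝ≥0∞) (hCM : CM ≠ ⊤) (hCMs : CMs ≠ ⊤)
    (hM : KernelBddE μ Q
      (fun x y => ⨆ z ∈ Qset U y, (‖frameKer φ z x‖₊ : ℝ≥0∞)) CM)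
    (hMs : KernelBddE μ Q
      (fun x y => ⨆ z ∈ Qset U x, (‖frameKer φ z y‖₊ : ℝ≥0∞)) CMs)
    -- partition of unity subordinate to `U` and sampling points:
    (Φ : I → X → ℝ) (hΦmeas : ∀ i, Measurable (Φ i))
    (hΦ0 : ∀ i x, 0 ≤ Φ i x) (hΦ1 : ∀ i x, Φ i x ≤ 1)
    (hΦsupp : ∀ i x, x ∉ U i → Φ i x = 0)
    (hΦsum : ∀ x, HasSum (fun i => Φ i x) 1)
    (xi : I → X) (hxi : ∀ i, xi i ∈ U i)
    -- `F ∈ Y` satisfying the reproducing formula pointwise: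
    (F : X → ℂ) (hFmeas : Measurable F)
    (hFY : Q.N (fun x => (‖F x‖₊ : ℝ≥0∞)) ≠ ⊤)
    (hFrep : ∀ x, F x = Rop μ φ F x) :
    -- absolute convergence a.e.:
    (∀ᵐ x ∂μ, Summable fun i =>
        ‖((∫ y, Φ i y ∂μ : ℝ) : ℂ) * F (xi i) * frameKer φ x (xi i)‖) ∧
    -- `U_Φ F ∈ Y` with the quasi-norm bound:
    Q.N (fun x =>
        (‖∑' i, ((∫ y, Φ i y ∂μ : ℝ) : ℂ) * F (xi i) * frameKer φ x (xi i)‖₊ : ℝ≥0∞)) ≤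
      (σ : ℝ≥0∞) * CM * CMs * Q.N (fun x => (‖F x‖₊ : ℝ≥0∞)) ∧
    -- `U_Φ F` lies in the range of `R`: `U_Φ F = R (U_Φ F)` a.e.:
    (∀ᵐ x ∂μ,
      (∑' i, ((∫ y, Φ i y ∂μ : ℝ) : ℂ) * F (xi i) * frameKer φ x (xi i)) =
        Rop μ φ
          (fun x' => ∑' i, ((∫ y, Φ i y ∂μ : ℝ) : ℂ) * F (xi i) * frameKer φ x' (xi i))
          x) :=
  discretization_operator_bounded_general Q φ hVmeas hParseval CR hRY U σ hU CM CMs hCM hCMs hM hMs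
    Φ hΦmeas hΦ0 hΦsupp hΦsum xi hxi F hFmeas hFY hFrep
end
end
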